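/- arXiv:2101.03528 — 2 statements merged into one kernel-verified Lean document; each statement's English description precedes it below -/
import Mathlib

section
/- Let L be a coatomic logic. A rule Γ ⊢ φ̄ (φ̄ a tuple of formulas) is antiadmissible in L if and only if Γ ⊢_{L^σ} φᵢ for every φᵢ in φ̄, where L^σ is the semisimple companion of L. -/
set_option linter.unusedVariables false

open FirstOrder Set

universe u

/-- Substitution composition for terms of a first-order language. -/
theorem FirstOrder.Language.Term.subst_subst' {L : FirstOrder.Language.{u, u}} {α β γ : Type u}
    (t : L.Term α) (f : α → L.Term β) (g : β → L.Term γ) :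
    (t.subst f).subst g = t.subst (fun i => (f i).subst g) := by
  induction t with
  | var => rfl
  | func f ts ih => simp only [Language.Term.subst, ih]

/-- A logic over the absolutely free algebra of `L`-terms in variables `Var`. -/
structure Logic (L : FirstOrder.Language.{u, u}) (Var : Type u) where
  Deriv : Set (L.Term Var) → L.Term Var → Prop
  deriv_refl : ∀ φ : L.Term Var, Deriv {φ} φ
  deriv_mono : ∀ {Γ Δ : Set (L.Term Var)} {φ : L.Term Var}, Deriv Γ φ → Γ ⊆ Δ → Deriv Δ φ
  deriv_cut : ∀ {Γ Φ : Set (L.Term Var)} {φ : L.Term Var},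
      (∀ ψ ∈ Φ, Deriv Γ ψ) → Deriv Φ φ → Deriv Γ φ
  deriv_subst : ∀ {Γ : Set (L.Term Var)} {φ : L.Term Var} (σ : Var → L.Term Var),
      Deriv Γ φ → Deriv ((fun t => t.subst σ) '' Γ) (φ.subst σ)

namespace Logic

variable {L : FirstOrder.Language.{u, u}} {Var : Type u} (Lg : Logic L Var)

/-- `Γ ⊢ φ` for every `φ ∈ Δ`. -/
def DerivAll (Γ Δ : Set (L.Term Var)) : Prop := ∀ φ ∈ Δ, Lg.Deriv Γ φ

/-- `Γ ⊢ Fm`, i.e. `Γ` derives every formula. -/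
def Inc (Γ : Set (L.Term Var)) : Prop := ∀ φ : L.Term Var, Lg.Deriv Γ φ

/-- A theory of the logic: a deductively closed set of formulas. -/
def IsTheory (T : Set (L.Term Var)) : Prop := ∀ φ : L.Term Var, Lg.Deriv T φ → φ ∈ T

/-- A simple theory: a maximal non-trivial theory. -/
def IsSimple (T : Set (L.Term Var)) : Prop :=
  Lg.IsTheory T ∧ T ≠ univ ∧
    ∀ T' : Set (L.Term Var), Lg.IsTheory T' → T' ≠ univ → T ⊆ T' → T' = T

/-- A semisimple theory: an intersection of simple theories. -/
def IsSemisimple (T : Set (L.Term Var)) : Prop :=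
  ∃ S : Set (Set (L.Term Var)), (∀ U ∈ S, Lg.IsSimple U) ∧ T = ⋂₀ S

/-- A semisimple logic: every theory is an intersection of simple theories. -/
def Semisimple : Prop := ∀ T : Set (L.Term Var), Lg.IsTheory T → Lg.IsSemisimple T

/-- A coatomic logic: every non-trivial theory extends to a simple theory. -/
def Coatomic : Prop :=
  ∀ T : Set (L.Term Var), Lg.IsTheory T → T ≠ univ → ∃ U, Lg.IsSimple U ∧ T ⊆ U

/-- A matrix `⟨A, F⟩` is a model of the logic if the preimage of `F` under any
homomorphism (equivalently, the realization along any valuation) is a theory. -/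
def IsModel (A : Type u) [L.Structure A] (F : Set A) : Prop :=
  ∀ v : Var → A, Lg.IsTheory {φ : L.Term Var | φ.realize v ∈ F}

/-- `Γ ⊢ ∅`: `Γ` cannot be jointly designated in any non-trivial model. -/
def Antitheorem (Γ : Set (L.Term Var)) : Prop :=
  ∀ (A : Type u) [L.Structure A], ∀ F : Set A, Lg.IsModel A F → F ≠ univ →
    ∀ v : Var → A, ¬((fun φ : L.Term Var => φ.realize v) '' Γ ⊆ F)

/-- κ-compactness: every inconsistent set has an inconsistent subset of size `< κ`. -/
def Compact (κ : Cardinal.{u}) : Prop :=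
  ∀ Γ : Set (L.Term Var), Lg.Inc Γ → ∃ Γ' ⊆ Γ, Cardinal.mk ↥Γ' < κ ∧ Lg.Inc Γ'

/-- κ-arity: any derivation uses fewer than κ premises. -/
def Ary (κ : Cardinal.{u}) : Prop :=
  ∀ (Γ : Set (L.Term Var)) (φ : L.Term Var), Lg.Deriv Γ φ →
    ∃ Γ' ⊆ Γ, Cardinal.mk ↥Γ' < κ ∧ Lg.Deriv Γ' φ

end Logic

/-- A parametrized family: for each ordinal `α`, a family of sets of formulas in
`α`-many variable slots together with parameter slots (indexed by `Var`). -/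
abbrev PFam (L : FirstOrder.Language.{u, u}) (Var : Type u) : Type (u + 1) :=
  ∀ α : Ordinal.{u}, Set (Set (L.Term (α.ToType ⊕ Var)))

/-- A local (parameter-free) family. -/
abbrev LFam (L : FirstOrder.Language.{u, u}) (Var : Type u) : Type (u + 1) :=
  ∀ α : Ordinal.{u}, Set (Set (L.Term α.ToType))

/-- A global family: a single set of formulas for each ordinal `α`. -/
abbrev GFam (L : FirstOrder.Language.{u, u}) (Var : Type u) : Type (u + 1) :=
  ∀ α : Ordinal.{u}, Set (L.Term α.ToType)

namespace Logic

variable {L : FirstOrder.Language.{u, u}} {Var : Type u}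

/-- `I(φ̄, π̄)`: instantiation of a parametrized set of formulas. -/
def pInst {α : Ordinal.{u}} (I : Set (L.Term (α.ToType ⊕ Var)))
    (phis : α.ToType → L.Term Var) (pis : Var → L.Term Var) : Set (L.Term Var) :=
  (fun t => t.subst (Sum.elim phis pis)) '' I

/-- `I(φ̄)`: instantiation of a parameter-free set of formulas. -/
def lInst {α : Ordinal.{u}} (I : Set (L.Term α.ToType))
    (phis : α.ToType → L.Term Var) : Set (L.Term Var) :=
  (fun t => t.subst phis) '' I

variable (Lg : Logic L Var)

/-- The κ-ary parametrized local inconsistency lemma w.r.t. the family `Ψ`. -/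
def ParamLocalIL (κ : Cardinal.{u}) (Ψ : PFam L Var) : Prop :=
  ∀ α : Ordinal.{u}, 0 < α → α < κ.ord →
    ∀ (Γ : Set (L.Term Var)) (phis : α.ToType → L.Term Var),
      Lg.Inc (Γ ∪ range phis) ↔
        ∃ I ∈ Ψ α, ∃ pis : Var → L.Term Var, Lg.DerivAll Γ (pInst I phis pis)

/-- The κ-ary local inconsistency lemma w.r.t. the family `Ψ`. -/
def LocalIL (κ : Cardinal.{u}) (Ψ : LFam L Var) : Prop :=
  ∀ α : Ordinal.{u}, 0 < α → α < κ.ord →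
    ∀ (Γ : Set (L.Term Var)) (phis : α.ToType → L.Term Var),
      Lg.Inc (Γ ∪ range phis) ↔ ∃ I ∈ Ψ α, Lg.DerivAll Γ (lInst I phis)

/-- The κ-ary global inconsistency lemma w.r.t. the family `Ψ`. -/
def GlobalIL (κ : Cardinal.{u}) (Ψ : GFam L Var) : Prop :=
  Lg.LocalIL κ (fun α => {Ψ α})

/-- The κ-ary dual parametrized local inconsistency lemma w.r.t. the family `Ψ`. -/
def DualParamLocalIL (κ : Cardinal.{u}) (Ψ : PFam L Var) : Prop :=
  ∀ α : Ordinal.{u}, 0 < α → α < κ.ord →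
    ∀ (Γ : Set (L.Term Var)) (phis : α.ToType → L.Term Var),
      (∀ i, Lg.Deriv Γ (phis i)) ↔
        ∀ I ∈ Ψ α, ∀ pis : Var → L.Term Var, Lg.Inc (Γ ∪ pInst I phis pis)

/-- The κ-ary dual local inconsistency lemma w.r.t. the family `Ψ`. -/
def DualLocalIL (κ : Cardinal.{u}) (Ψ : LFam L Var) : Prop :=
  ∀ α : Ordinal.{u}, 0 < α → α < κ.ord →
    ∀ (Γ : Set (L.Term Var)) (phis : α.ToType → L.Term Var),
      (∀ i, Lg.Deriv Γ (phis i)) ↔ ∀ I ∈ Ψ α, Lg.Inc (Γ ∪ lInst I phis)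

/-- The κ-ary dual global inconsistency lemma w.r.t. the family `Ψ`. -/
def DualGlobalIL (κ : Cardinal.{u}) (Ψ : GFam L Var) : Prop :=
  Lg.DualLocalIL κ (fun α => {Ψ α})

/-- The κ-ary classical parametrized local IL: both the ordinary and dual IL. -/
def ClassicalParamLocalIL (κ : Cardinal.{u}) (Ψ : PFam L Var) : Prop :=
  Lg.ParamLocalIL κ Ψ ∧ Lg.DualParamLocalIL κ Ψ

/-- The κ-ary classical local IL: both the ordinary and dual IL. -/
def ClassicalLocalIL (κ : Cardinal.{u}) (Ψ : LFam L Var) : Prop :=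
  Lg.LocalIL κ Ψ ∧ Lg.DualLocalIL κ Ψ

/-- The κ-ary classical global IL: both the ordinary and dual IL. -/
def ClassicalGlobalIL (κ : Cardinal.{u}) (Ψ : GFam L Var) : Prop :=
  Lg.GlobalIL κ Ψ ∧ Lg.DualGlobalIL κ Ψ

/-- The κ-ary parametrized local law of the excluded middle w.r.t. `Ψ`. -/
def ParamLocalLEM (κ : Cardinal.{u}) (Ψ : PFam L Var) : Prop :=
  (∀ α : Ordinal.{u}, 0 < α → α < κ.ord → ∀ I ∈ Ψ α,
    ∀ (phis : α.ToType → L.Term Var) (pis : Var → L.Term Var),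
      Lg.Inc (range phis ∪ pInst I phis pis)) ∧
  (∀ α : Ordinal.{u}, 0 < α → α < κ.ord →
    ∀ (Γ : Set (L.Term Var)) (phis : α.ToType → L.Term Var) (ψ : L.Term Var),
      Lg.Deriv (Γ ∪ range phis) ψ →
      (∀ I ∈ Ψ α, ∀ pis : Var → L.Term Var, Lg.Deriv (Γ ∪ pInst I phis pis) ψ) →
      Lg.Deriv Γ ψ)

/-- The κ-ary local law of the excluded middle w.r.t. `Ψ`. -/
def LocalLEM (κ : Cardinal.{u}) (Ψ : LFam L Var) : Prop :=
  (∀ α : Ordinal.{u}, 0 < α → α < κ.ord → ∀ I ∈ Ψ α,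
    ∀ phis : α.ToType → L.Term Var, Lg.Inc (range phis ∪ lInst I phis)) ∧
  (∀ α : Ordinal.{u}, 0 < α → α < κ.ord →
    ∀ (Γ : Set (L.Term Var)) (phis : α.ToType → L.Term Var) (ψ : L.Term Var),
      Lg.Deriv (Γ ∪ range phis) ψ →
      (∀ I ∈ Ψ α, Lg.Deriv (Γ ∪ lInst I phis) ψ) → Lg.Deriv Γ ψ)

/-- The κ-ary simple parametrized local IL w.r.t. `Ψ`. -/
def SimpleParamLocalIL (κ : Cardinal.{u}) (Ψ : PFam L Var) : Prop :=
  (∀ α : Ordinal.{u}, 0 < α → α < κ.ord → ∀ I ∈ Ψ α,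
    ∀ (phis : α.ToType → L.Term Var) (pis : Var → L.Term Var),
      Lg.Inc (range phis ∪ pInst I phis pis)) ∧
  (∀ α : Ordinal.{u}, 0 < α → α < κ.ord →
    ∀ T : Set (L.Term Var), Lg.IsSimple T → ∀ phis : α.ToType → L.Term Var,
      Lg.Inc (T ∪ range phis) →
        ∃ I ∈ Ψ α, ∃ pis : Var → L.Term Var, Lg.DerivAll T (pInst I phis pis))

/-- The κ-ary simple local IL w.r.t. `Ψ`. -/
def SimpleLocalIL (κ : Cardinal.{u}) (Ψ : LFam L Var) : Prop :=
  (∀ α : Ordinal.{u}, 0 < α → α < κ.ord → ∀ I ∈ Ψ α,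
    ∀ phis : α.ToType → L.Term Var, Lg.Inc (range phis ∪ lInst I phis)) ∧
  (∀ α : Ordinal.{u}, 0 < α → α < κ.ord →
    ∀ T : Set (L.Term Var), Lg.IsSimple T → ∀ phis : α.ToType → L.Term Var,
      Lg.Inc (T ∪ range phis) → ∃ I ∈ Ψ α, Lg.DerivAll T (lInst I phis))

end Logic

/-- Family for the parametrized local DDT: sets of formulas `I(p̄, q, r̄)`. -/
abbrev PFamD (L : FirstOrder.Language.{u, u}) (Var : Type u) : Type (u + 1) :=
  ∀ α : Ordinal.{u}, Set (Set (L.Term (α.ToType ⊕ (PUnit.{u + 1} ⊕ Var))))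

/-- Family for the local DDT: sets of formulas `I(p̄, q)`. -/
abbrev LFamD (L : FirstOrder.Language.{u, u}) (Var : Type u) : Type (u + 1) :=
  ∀ α : Ordinal.{u}, Set (Set (L.Term (α.ToType ⊕ PUnit.{u + 1})))

/-- Family for the global DDT: a single set `I(p̄, q)` for each `α`. -/
abbrev GFamD (L : FirstOrder.Language.{u, u}) (Var : Type u) : Type (u + 1) :=
  ∀ α : Ordinal.{u}, Set (L.Term (α.ToType ⊕ PUnit.{u + 1}))

namespace Logic

variable {L : FirstOrder.Language.{u, u}} {Var : Type u}

/-- `I(φ̄, ψ)`: instantiation of a DDT set of formulas. -/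
def dInst {α : Ordinal.{u}} (I : Set (L.Term (α.ToType ⊕ PUnit.{u + 1})))
    (phis : α.ToType → L.Term Var) (ψ : L.Term Var) : Set (L.Term Var) :=
  (fun t => t.subst (Sum.elim phis (fun _ => ψ))) '' I

/-- `I(φ̄, ψ, π̄)`: instantiation of a parametrized DDT set of formulas. -/
def pdInst {α : Ordinal.{u}} (I : Set (L.Term (α.ToType ⊕ (PUnit.{u + 1} ⊕ Var))))
    (phis : α.ToType → L.Term Var) (ψ : L.Term Var) (pis : Var → L.Term Var) :
    Set (L.Term Var) :=
  (fun t => t.subst (Sum.elim phis (Sum.elim (fun _ => ψ) pis))) '' I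

variable (Lg : Logic L Var)

/-- The κ-ary local deduction--detachment theorem w.r.t. `Φ`. -/
def LocalDDT (κ : Cardinal.{u}) (Φ : LFamD L Var) : Prop :=
  ∀ α : Ordinal.{u}, 0 < α → α < κ.ord →
    ∀ (Γ : Set (L.Term Var)) (phis : α.ToType → L.Term Var) (ψ : L.Term Var),
      Lg.Deriv (Γ ∪ range phis) ψ ↔ ∃ I ∈ Φ α, Lg.DerivAll Γ (dInst I phis ψ)

/-- The κ-ary global deduction--detachment theorem w.r.t. `Φ`. -/
def GlobalDDT (κ : Cardinal.{u}) (Φ : GFamD L Var) : Prop :=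
  Lg.LocalDDT κ (fun α => {Φ α})

/-- The κ-ary parametrized local deduction--detachment theorem w.r.t. `Φ`. -/
def ParamLocalDDT (κ : Cardinal.{u}) (Φ : PFamD L Var) : Prop :=
  ∀ α : Ordinal.{u}, 0 < α → α < κ.ord →
    ∀ (Γ : Set (L.Term Var)) (phis : α.ToType → L.Term Var) (ψ : L.Term Var),
      Lg.Deriv (Γ ∪ range phis) ψ ↔
        ∃ I ∈ Φ α, ∃ pis : Var → L.Term Var, Lg.DerivAll Γ (pdInst I phis ψ pis)

/-- A protoimplication set: a set `Δ(p, q)` of formulas in two variables with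
`∅ ⊢ Δ(p, p)` and `p, Δ(p, q) ⊢ q` (stated via all instances, by structurality). -/
def HasProtoimplication : Prop :=
  ∃ Δ : Set (L.Term (ULift.{u} Bool)),
    (∀ φ : L.Term Var,
      Lg.DerivAll ∅ ((fun t => t.subst (fun _ => φ)) '' Δ)) ∧
    (∀ φ ψ : L.Term Var,
      Lg.Deriv (insert φ ((fun t => t.subst (fun b => if b.down then ψ else φ)) '' Δ)) ψ)

/-- A rule `Γ ⊢ φ̄` is antiadmissible: substitution instances preserve
inconsistency in every context. -/
def Antiadmissible {ι : Type u} (Γ : Set (L.Term Var)) (phis : ι → L.Term Var) : Prop :=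
  ∀ (σ : Var → L.Term Var) (Δ : Set (L.Term Var)),
    Lg.Inc (range (fun i => (phis i).subst σ) ∪ Δ) →
    Lg.Inc ((fun t => t.subst σ) '' Γ ∪ Δ)

/-- The semisimple companion of a logic: the logic determined by the
simple theories of `Lg`. -/
def companion (Lg : Logic L Var) : Logic L Var where
  Deriv Γ φ := ∀ T : Set (L.Term Var), Lg.IsSimple T →
    ∀ σ : Var → L.Term Var, (fun t => t.subst σ) '' Γ ⊆ T → φ.subst σ ∈ T
  deriv_refl := by
    intro φ T _ σ h
    exact h ⟨φ, rfl, rfl⟩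
  deriv_mono := by
    intro Γ Δ φ hΓ hsub T hT σ h
    exact hΓ T hT σ (fun x hx => h ((Set.image_mono hsub) hx))
  deriv_cut := by
    intro Γ Φ φ hΓ hΦ T hT σ h
    refine hΦ T hT σ ?_
    rintro x ⟨ψ, hψ, rfl⟩
    exact hΓ ψ hψ T hT σ h
  deriv_subst := by
    intro Γ φ σ hΓ T hT τ h
    rw [FirstOrder.Language.Term.subst_subst']
    refine hΓ T hT (fun v => (σ v).subst τ) ?_
    rintro x ⟨ψ, hψ, rfl⟩
    show (ψ.subst fun v => (σ v).subst τ) ∈ T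
    rw [← FirstOrder.Language.Term.subst_subst']
    exact h ⟨ψ.subst σ, ⟨ψ, hψ, rfl⟩, rfl⟩

/-- Equivalence of two parametrized IL families, stated through all of their
instances (which, by structurality, is equivalent to the schematic entailments
`I(p̄, q̄) ⊢ I'(p̄, π̄')`). -/
def FamEquiv (Lg : Logic L Var) (κ : Cardinal.{u}) (Ψ Ψ' : PFam L Var) : Prop :=
  (∀ α : Ordinal.{u}, 0 < α → α < κ.ord →
    ∀ I ∈ Ψ α, ∃ I' ∈ Ψ' α, ∃ pis' : Var → L.Term (α.ToType ⊕ Var),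
      ∀ (phis : α.ToType → L.Term Var) (rhos : Var → L.Term Var),
        Lg.DerivAll (pInst I phis rhos)
          (pInst I' phis (fun v => (pis' v).subst (Sum.elim phis rhos)))) ∧
  (∀ α : Ordinal.{u}, 0 < α → α < κ.ord →
    ∀ I' ∈ Ψ' α, ∃ I ∈ Ψ α, ∃ pis : Var → L.Term (α.ToType ⊕ Var),
      ∀ (phis : α.ToType → L.Term Var) (rhos : Var → L.Term Var),
        Lg.DerivAll (pInst I' phis rhos)
          (pInst I phis (fun v => (pis v).subst (Sum.elim phis rhos))))

end Logic


/-!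
A formula outside a simple theory `T` is inconsistent with `T`, by maximality; so if a simple
`T ⊇ σ[Γ]` missed some `σ(φᵢ)`, antiadmissibility applied with `Δ = T` would make `T` itself
inconsistent. Conversely, in a coatomic logic a consistent `σ[Γ] ∪ Δ` extends to a simple theory,
which then also contains `σ(φ̄) ∪ Δ`.
-/

namespace Logic

variable {L : FirstOrder.Language.{u, u}} {Var : Type u} {Lg : Logic L Var}

theorem deriv_of_mem (Lg : Logic L Var) {Γ : Set (L.Term Var)} {φ : L.Term Var} (h : φ ∈ Γ) :
    Lg.Deriv Γ φ :=
  Lg.deriv_mono (Lg.deriv_refl φ) (singleton_subset_iff.2 h)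

theorem isTheory_setOf_deriv (Lg : Logic L Var) (Γ : Set (L.Term Var)) :
    Lg.IsTheory {φ | Lg.Deriv Γ φ} :=
  fun _ h => Lg.deriv_cut (fun _ hψ => hψ) h

theorem setOf_deriv_eq_univ_iff {Γ : Set (L.Term Var)} :
    {φ | Lg.Deriv Γ φ} = univ ↔ Lg.Inc Γ :=
  eq_univ_iff_forall

theorem IsSimple.not_inc_of_subset {T Γ : Set (L.Term Var)} (hT : Lg.IsSimple T) (hΓ : Γ ⊆ T) :
    ¬Lg.Inc Γ :=
  fun hinc => hT.2.1 (eq_univ_of_forall fun φ => hT.1 φ (Lg.deriv_mono (hinc φ) hΓ))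

theorem IsSimple.inc_insert_of_notMem {T : Set (L.Term Var)} {φ : L.Term Var}
    (hT : Lg.IsSimple T) (hφ : φ ∉ T) : Lg.Inc (insert φ T) := by
  by_contra hcon
  have hclosure : {ψ | Lg.Deriv (insert φ T) ψ} = T :=
    hT.2.2 _ (Lg.isTheory_setOf_deriv _) (mt setOf_deriv_eq_univ_iff.1 hcon)
      fun ψ hψ => Lg.deriv_of_mem (mem_insert_of_mem φ hψ)
  exact hφ (hclosure ▸ Lg.deriv_of_mem (mem_insert φ T))

theorem Coatomic.exists_isSimple_superset (hco : Lg.Coatomic) {Γ : Set (L.Term Var)}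
    (hΓ : ¬Lg.Inc Γ) : ∃ T, Lg.IsSimple T ∧ Γ ⊆ T := by
  obtain ⟨T, hT, hsub⟩ := hco _ (Lg.isTheory_setOf_deriv Γ) (mt setOf_deriv_eq_univ_iff.1 hΓ)
  exact ⟨T, hT, fun φ hφ => hsub (Lg.deriv_of_mem hφ)⟩

end Logic

/-- a rule `Γ ⊢ φ̄` is antiadmissible in a coatomic logic `L` iff
it is valid in the semisimple companion of `L`. -/
theorem statement_16 {L : FirstOrder.Language.{u, u}} {Var : Type u} (Lg : Logic L Var) (hco : Lg.Coatomic)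
    {ι : Type u} (Γ : Set (L.Term Var)) (phis : ι → L.Term Var) :
    Lg.Antiadmissible Γ phis ↔ ∀ i, (Lg.companion).Deriv Γ (phis i) := by
  constructor
  · intro hanti i T hT σ hΓT
    by_contra hφ
    have hinc : Lg.Inc (range (fun j => (phis j).subst σ) ∪ T) := fun ψ =>
      Lg.deriv_mono (hT.inc_insert_of_notMem hφ ψ)
        (insert_subset (Or.inl ⟨i, rfl⟩) subset_union_right)
    exact hT.not_inc_of_subset (union_subset hΓT subset_rfl) (hanti σ T hinc)
  · intro hvalid σ Δ hinc
    by_contra hΔ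
    obtain ⟨T, hT, hsub⟩ := hco.exists_isSimple_superset hΔ
    have hphis : range (fun j => (phis j).subst σ) ⊆ T :=
      range_subset_iff.2 fun j => hvalid j T hT σ (subset_union_left.trans hsub)
    exact hT.not_inc_of_subset (union_subset hphis (subset_union_right.trans hsub)) hinc
end

section
/- Let L be a coatomic logic with the simple local IL (with respect to some family). Then the theories of the semisimple companion L^σ are precisely the semisimple theories of L; in particular, L^σ is a semisimple logic. -/
set_option linter.unusedVariables false

open FirstOrder Set

universe u

/-!
For a simple theory `U` and a substitution `σ`, the preimage `σ⁻¹[U]` is simple unless it is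
trivial: if `ψ ∉ σ⁻¹[U]`, the simple local IL gives `U ⊢ I(σψ) = σ[I(ψ)]`, so every theory
containing `σ⁻¹[U]` and `ψ` contains the inconsistent set `{ψ} ∪ I(ψ)`. Consequently, if `φ`
lies in every simple theory containing `Γ`, then `Γ ⊢_{L^σ} φ`: a theory of `L^σ` is the
intersection of the simple theories of `L` above it, and these are simple in `L^σ` as well,
because `L^σ` extends `L`.
-/

theorem FirstOrder.Language.Term.subst_var {L : FirstOrder.Language.{u, u}} {α : Type u}
    (t : L.Term α) : t.subst Language.Term.var = t := by
  induction t with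
  | var => rfl
  | func f ts ih => simp only [Language.Term.subst, ih]

namespace Logic

variable {L : FirstOrder.Language.{u, u}} {Var : Type u} {Lg : Logic L Var}
  {Γ T U : Set (L.Term Var)} {φ : L.Term Var}

theorem IsTheory.eq_univ_of_inc (hT : Lg.IsTheory T) (hΓ : Lg.Inc Γ) (hΓT : Γ ⊆ T) :
    T = univ :=
  eq_univ_of_forall fun ψ => hT ψ (Lg.deriv_mono (hΓ ψ) hΓT)

theorem IsTheory.preimage_subst (hT : Lg.IsTheory T) (σ : Var → L.Term Var) :
    Lg.IsTheory ((fun t => t.subst σ) ⁻¹' T) := fun ψ hψ =>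
  hT _ (Lg.deriv_mono (Lg.deriv_subst σ hψ) (image_preimage_subset _ _))

theorem IsSimple.inc_union_singleton (hU : Lg.IsSimple U) (hφ : φ ∉ U) :
    Lg.Inc (U ∪ {φ}) := by
  by_contra hcons
  let W : Set (L.Term Var) := {ψ | Lg.Deriv (U ∪ {φ}) ψ}
  have hW : Lg.IsTheory W := fun ψ hψ => Lg.deriv_cut (fun χ hχ => hχ) hψ
  have hUW : U ⊆ W := fun ψ hψ =>
    Lg.deriv_mono (Lg.deriv_refl ψ) (singleton_subset_iff.2 (Or.inl hψ))
  have hφW : φ ∈ W := Lg.deriv_mono (Lg.deriv_refl φ) subset_union_right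
  have hWU : W = U := hU.2.2 W hW (fun h => hcons (eq_univ_iff_forall.1 h)) hUW
  exact hφ (hWU ▸ hφW)

variable {κ : Cardinal.{u}} {Ψ : LFam L Var}

theorem SimpleLocalIL.exists_derivAll_of_notMem (hsil : Lg.SimpleLocalIL κ Ψ) (hκ : 1 < κ)
    (hU : Lg.IsSimple U) (hφ : φ ∉ U) :
    ∃ I ∈ Ψ 1, Lg.DerivAll U (lInst I fun _ : (1 : Ordinal.{u}).ToType => φ) := by
  refine hsil.2 1 zero_lt_one (by simpa [Cardinal.lt_ord] using hκ) U hU _ ?_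
  simpa only [range_const] using hU.inc_union_singleton hφ

theorem SimpleLocalIL.inc_insert_lInst (hsil : Lg.SimpleLocalIL κ Ψ) (hκ : 1 < κ)
    {I : Set (L.Term (1 : Ordinal.{u}).ToType)} (hI : I ∈ Ψ 1) (φ : L.Term Var) :
    Lg.Inc (insert φ (lInst I fun _ => φ)) := by
  simpa only [range_const, singleton_union] using
    hsil.1 1 zero_lt_one (by simpa [Cardinal.lt_ord] using hκ) I hI fun _ => φ

theorem SimpleLocalIL.isSimple_preimage_subst (hsil : Lg.SimpleLocalIL κ Ψ) (hκ : 1 < κ)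
    (hU : Lg.IsSimple U) (σ : Var → L.Term Var)
    (hne : (fun t : L.Term Var => t.subst σ) ⁻¹' U ≠ univ) :
    Lg.IsSimple ((fun t : L.Term Var => t.subst σ) ⁻¹' U) := by
  refine ⟨hU.1.preimage_subst σ, hne, fun W hW hWne hVW => ?_⟩
  refine (hVW.antisymm fun ψ hψW => ?_).symm
  by_contra hψ
  obtain ⟨I, hI, hIU⟩ := hsil.exists_derivAll_of_notMem hκ hU hψ
  have hIV : lInst I (fun _ => ψ) ⊆ (fun t => t.subst σ) ⁻¹' U := by
    rintro _ ⟨t, ht, rfl⟩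
    change Language.Term.subst (Language.Term.subst t _) σ ∈ U
    rw [Language.Term.subst_subst']
    exact hU.1 _ (hIU _ ⟨t, ht, rfl⟩)
  exact hWne (hW.eq_univ_of_inc (hsil.inc_insert_lInst hκ hI ψ)
    (insert_subset hψW (hIV.trans hVW)))

theorem companion_deriv_of_deriv (h : Lg.Deriv Γ φ) : Lg.companion.Deriv Γ φ :=
  fun _ hU σ hσ => hU.1 _ (Lg.deriv_mono (Lg.deriv_subst σ h) hσ)

theorem IsTheory.of_companion (hT : Lg.companion.IsTheory T) : Lg.IsTheory T :=
  fun φ hφ => hT φ (companion_deriv_of_deriv hφ)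

theorem mem_of_companion_deriv (h : Lg.companion.Deriv Γ φ) (hU : Lg.IsSimple U)
    (hΓU : Γ ⊆ U) : φ ∈ U := by
  simpa only [Language.Term.subst_var] using
    h U hU Language.Term.var (by simpa only [Language.Term.subst_var, image_id'] using hΓU)

theorem IsSemisimple.companion_isTheory (hT : Lg.IsSemisimple T) : Lg.companion.IsTheory T := by
  obtain ⟨S, hS, rfl⟩ := hT
  exact fun φ hφ => mem_sInter.2 fun U hU =>
    mem_of_companion_deriv hφ (hS U hU) (sInter_subset_of_mem hU)

theorem IsSimple.companion_isSimple (hU : Lg.IsSimple U) : Lg.companion.IsSimple U :=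
  ⟨IsSemisimple.companion_isTheory ⟨{U}, by simpa using hU, (sInter_singleton U).symm⟩,
    hU.2.1, fun W hW hWne hUW => hU.2.2 W hW.of_companion hWne hUW⟩

theorem SimpleLocalIL.companion_deriv_of_forall_isSimple (hsil : Lg.SimpleLocalIL κ Ψ)
    (hκ : 1 < κ) (hφ : ∀ U, Lg.IsSimple U → Γ ⊆ U → φ ∈ U) : Lg.companion.Deriv Γ φ := by
  intro U hU σ hσ
  by_contra hφU
  have hV := hsil.isSimple_preimage_subst hκ hU σ fun h => hφU (eq_univ_iff_forall.1 h φ)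
  exact hφU (hφ _ hV (image_subset_iff.1 hσ))

theorem SimpleLocalIL.eq_sInter_isSimple (hsil : Lg.SimpleLocalIL κ Ψ) (hκ : 1 < κ)
    (hT : Lg.companion.IsTheory T) : T = ⋂₀ {U | Lg.IsSimple U ∧ T ⊆ U} :=
  subset_antisymm (fun _ hφ => mem_sInter.2 fun _ hU => hU.2 hφ) fun φ hφ =>
    hT φ (hsil.companion_deriv_of_forall_isSimple hκ fun U hU hTU => hφ U ⟨hU, hTU⟩)

end Logic

theorem statement_18_general {L : FirstOrder.Language.{u, u}} {Var : Type u} (Lg : Logic L Var)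
    (hsil : ∃ Ψ : LFam L Var, Lg.SimpleLocalIL 2 Ψ) :
    (∀ T : Set (L.Term Var), (Lg.companion).IsTheory T ↔ Lg.IsSemisimple T) ∧
    (Lg.companion).Semisimple := by
  obtain ⟨Ψ, hsil⟩ := hsil
  have hκ : (1 : Cardinal.{u}) < 2 := Cardinal.one_lt_two
  refine ⟨fun T => ⟨fun hT => ?_, Logic.IsSemisimple.companion_isTheory⟩, fun T hT => ?_⟩
  · exact ⟨_, fun U hU => hU.1, hsil.eq_sInter_isSimple hκ hT⟩
  · exact ⟨_, fun U hU => hU.1.companion_isSimple, hsil.eq_sInter_isSimple hκ hT⟩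

/-- for a coatomic logic with the simple local IL, the theories of
the semisimple companion are exactly the semisimple theories of `L`; in
particular the companion is a semisimple logic. -/
theorem statement_18 {L : FirstOrder.Language.{u, u}} {Var : Type u} (Lg : Logic L Var) (hco : Lg.Coatomic)
    (hsil : ∃ Ψ : LFam L Var, Lg.SimpleLocalIL 2 Ψ) :
    (∀ T : Set (L.Term Var), (Lg.companion).IsTheory T ↔ Lg.IsSemisimple T) ∧
    (Lg.companion).Semisimple :=
  statement_18_general Lg hsil
end
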